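/- arXiv:1503.04895 — 3 statements merged into one kernel-verified Lean document; each statement's English description precedes it below -/
import Mathlib

section
/- Let d ≥ 3, M ≥ 1, and N_M = d + d(d-1) + ⋯ + d(d-1)^{M-1} = d((d-1)^M - 1)/(d-2). If nonnegative real numbers b, w, g satisfy g ≤ N_M · w and d·b + (d-2)·g ≥ (d - 2 - (3d-8)/(3N_M+4))·(w + b + g), and w + b > 0, then b/(b+w) ≥ 1/4. -/
theorem le_three_mul_of_expansion_bound {d N b w g : ℝ} (hd : 8 ≤ 3 * d) (hN : 0 ≤ N)
    (hg : g ≤ N * w)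
    (hexp : (d - 2 - (3 * d - 8) / (3 * N + 4)) * (w + b + g) ≤ d * b + (d - 2) * g) :
    w ≤ 3 * b := by
  have hD : 0 < 3 * N + 4 := by linarith
  have hcleared : ((d - 2) * (3 * N + 4) - (3 * d - 8)) * (w + b + g) ≤
      (d * b + (d - 2) * g) * (3 * N + 4) := by
    refine le_of_eq_of_le ?_ (mul_le_mul_of_nonneg_right hexp hD.le)
    rw [mul_right_comm, sub_mul _ ((3 * d - 8) / _), div_mul_cancel₀ _ hD.ne']
  have hgN := mul_le_mul_of_nonneg_left hg (by linarith : 0 ≤ 3 * d - 8)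
  -- Expanding, the terms in `g` cancel against `(3d - 8) N w`, leaving `(2N + d) w ≤ 3 (2N + d) b`.
  have hkey : (2 * N + d) * w ≤ (2 * N + d) * (3 * b) := by linarith
  exact le_of_mul_le_mul_left hkey (by linarith)

theorem one_fourth_le_div_add_of_le_three_mul {b w : ℝ} (hwb : w ≤ 3 * b) (hpos : 0 < w + b) :
    1 / 4 ≤ b / (b + w) := by
  rw [le_div_iff₀ (by linarith)]
  linarith

theorem stmt_0_general (d M : ℕ) (hd : 3 ≤ d)
    (NM : ℝ) (hNM : NM = ∑ i ∈ Finset.range M, (d : ℝ) * ((d : ℝ) - 1) ^ i)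
    (b w g : ℝ)
    (h1 : g ≤ NM * w)
    (h2 : (d : ℝ) * b + ((d : ℝ) - 2) * g ≥
      ((d : ℝ) - 2 - (3 * (d : ℝ) - 8) / (3 * NM + 4)) * (w + b + g))
    (hpos : 0 < w + b) :
    b / (b + w) ≥ 1 / 4 := by
  have hd' : (3 : ℝ) ≤ d := by exact_mod_cast hd
  have hNM_nonneg : 0 ≤ NM := hNM ▸ Finset.sum_nonneg fun i _ ↦
    mul_nonneg (Nat.cast_nonneg d) (pow_nonneg (by linarith) i)
  exact one_fourth_le_div_add_of_le_three_mul
    (le_three_mul_of_expansion_bound (by linarith) hNM_nonneg h1 h2) hpos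

/-- Arithmetic core of the black-vertex counting argument. -/
theorem stmt_0 (d M : ℕ) (hd : 3 ≤ d) (hM : 1 ≤ M)
    (NM : ℝ) (hNM : NM = ∑ i ∈ Finset.range M, (d : ℝ) * ((d : ℝ) - 1) ^ i)
    (b w g : ℝ) (hb : 0 ≤ b) (hw : 0 ≤ w) (hg : 0 ≤ g)
    (h1 : g ≤ NM * w)
    (h2 : (d : ℝ) * b + ((d : ℝ) - 2) * g ≥
      ((d : ℝ) - 2 - (3 * (d : ℝ) - 8) / (3 * NM + 4)) * (w + b + g))
    (hpos : 0 < w + b) :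
    b / (b + w) ≥ 1 / 4 :=
  stmt_0_general d M hd NM hNM b w g h1 h2 hpos
end

section
/- Let G be a finite graph with n vertices, maximum degree d, and vertex isoperimetric constant at least h > 0. If S ⊆ V(G) satisfies n/2 ≤ |S| < ((d+2h)/(2d+2h))·n, then the 1-neighborhood S₁ of S satisfies |S₁| ≥ |S| + (h/d)·|Sᶜ| ≥ ((d+2h)/(2d+2h))·n. -/
/-!
Let `∂T` be the set of vertices outside `T` with a neighbour in `T`, so that the 1-neighbourhood
of `S` is `S ⊔ ∂S`. Since `|Sᶜ| ≤ n/2`, the isoperimetric bound gives `h |Sᶜ| ≤ |∂(Sᶜ)|`, and every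
vertex of `∂(Sᶜ) ⊆ S` is a neighbour of some vertex of `∂S ⊆ Sᶜ`, so `|∂(Sᶜ)| ≤ d |∂S|`.
The second inequality is then elementary arithmetic using `|Sᶜ| ≤ |S|`.
-/

namespace SimpleGraph

variable {V : Type*} [Fintype V] [DecidableEq V] (G : SimpleGraph V) [DecidableRel G.Adj]

def vertexBoundary (T : Finset V) : Finset V :=
  Finset.univ.filter fun v => v ∉ T ∧ ∃ u ∈ T, G.Adj u v

variable {G}

theorem mem_vertexBoundary {T : Finset V} {v : V} :
    v ∈ G.vertexBoundary T ↔ v ∉ T ∧ ∃ u ∈ T, G.Adj u v := by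
  simp [vertexBoundary]

theorem card_union_filter_adj (S : Finset V) :
    (S ∪ Finset.univ.filter fun v => ∃ u ∈ S, G.Adj u v).card =
      S.card + (G.vertexBoundary S).card := by
  have hunion : (S ∪ Finset.univ.filter fun v => ∃ u ∈ S, G.Adj u v) =
      S ∪ G.vertexBoundary S := by
    ext v
    simp only [Finset.mem_union, Finset.mem_filter, Finset.mem_univ, true_and,
      mem_vertexBoundary]
    tauto
  rw [hunion, Finset.card_union_of_disjoint]
  exact Finset.disjoint_left.2 fun _ hvS hv => (mem_vertexBoundary.1 hv).1 hvS

theorem vertexBoundary_compl_subset_biUnion (S : Finset V) :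
    G.vertexBoundary Sᶜ ⊆ (G.vertexBoundary S).biUnion fun u => G.neighborFinset u := by
  intro v hv
  obtain ⟨hvS, u, huS, hadj⟩ := mem_vertexBoundary.1 hv
  rw [Finset.notMem_compl] at hvS
  rw [Finset.mem_compl] at huS
  exact Finset.mem_biUnion.2
    ⟨u, mem_vertexBoundary.2 ⟨huS, v, hvS, hadj.symm⟩, (G.mem_neighborFinset u v).2 hadj⟩

theorem card_vertexBoundary_compl_le {d : ℕ} (hdeg : ∀ v, G.degree v ≤ d) (S : Finset V) :
    (G.vertexBoundary Sᶜ).card ≤ d * (G.vertexBoundary S).card :=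
  calc (G.vertexBoundary Sᶜ).card
      ≤ ((G.vertexBoundary S).biUnion fun u => G.neighborFinset u).card :=
        Finset.card_le_card (vertexBoundary_compl_subset_biUnion S)
    _ ≤ ∑ u ∈ G.vertexBoundary S, (G.neighborFinset u).card := Finset.card_biUnion_le
    _ ≤ ∑ _u ∈ G.vertexBoundary S, d := Finset.sum_le_sum fun u _ => hdeg u
    _ = d * (G.vertexBoundary S).card := by rw [Finset.sum_const, smul_eq_mul, mul_comm]

end SimpleGraph

theorem div_mul_le_of_mul_le_mul {h c d a : ℝ} (hd : 0 ≤ d) (ha : 0 ≤ a)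
    (hcd : h * c ≤ d * a) : h / d * c ≤ a := by
  rcases hd.eq_or_lt with rfl | hd
  · simpa using ha
  · rw [div_mul_eq_mul_div, div_le_iff₀ hd]
    linarith

theorem div_mul_add_le_add_of_mul_le_mul {h c d a s : ℝ} (hd : 0 ≤ d) (hh : 0 < h) (ha : 0 ≤ a)
    (hcs : c ≤ s) (hcd : h * c ≤ d * a) :
    (d + 2 * h) / (2 * d + 2 * h) * (s + c) ≤ s + a := by
  rw [div_mul_eq_mul_div, div_le_iff₀ (by positivity)]
  nlinarith

open Classical in
theorem stmt_3_general {V : Type*} [Fintype V] (G : SimpleGraph V)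
    (n : ℕ) (hn : Fintype.card V = n)
    (d : ℕ) (hdeg : ∀ v, G.degree v ≤ d)
    (h : ℝ) (hh : 0 < h)
    (hiso : ∀ T : Finset V, (T.card : ℝ) ≤ n / 2 →
      h * T.card ≤ ((Finset.univ.filter fun v =>
        v ∉ T ∧ ∃ u ∈ T, G.Adj u v).card : ℝ))
    (S : Finset V)
    (hS1 : (n : ℝ) / 2 ≤ S.card)
    (S₁ : Finset V)
    (hS₁ : S₁ = S ∪ Finset.univ.filter fun v => ∃ u ∈ S, G.Adj u v) :
    (S.card : ℝ) + (h / d) * Sᶜ.card ≤ (S₁.card : ℝ) ∧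
      ((d + 2 * h) / (2 * d + 2 * h)) * n ≤ (S₁.card : ℝ) := by
  have hsplit : (S.card : ℝ) + Sᶜ.card = n := by
    rw [← hn]; exact_mod_cast S.card_add_card_compl
  have hS₁card : (S₁.card : ℝ) = S.card + (G.vertexBoundary S).card := by
    rw [hS₁]; exact_mod_cast G.card_union_filter_adj S
  have hexpand : h * Sᶜ.card ≤ d * (G.vertexBoundary S).card :=
    (hiso Sᶜ (by linarith)).trans (by exact_mod_cast G.card_vertexBoundary_compl_le hdeg S)
  have hd : (0 : ℝ) ≤ d := d.cast_nonneg
  have ha : (0 : ℝ) ≤ (G.vertexBoundary S).card := Nat.cast_nonneg _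
  refine ⟨?_, ?_⟩
  · rw [hS₁card]
    linarith [div_mul_le_of_mul_le_mul hd ha hexpand]
  · rw [hS₁card, ← hsplit]
    exact div_mul_add_le_add_of_mul_le_mul hd hh ha (by linarith) hexpand

open Classical in
/-- One expansion step for a set of size between n/2 and ((d+2h)/(2d+2h))n. -/
theorem stmt_3 {V : Type*} [Fintype V] (G : SimpleGraph V)
    (n : ℕ) (hn : Fintype.card V = n)
    (d : ℕ) (hd : 0 < d) (hdeg : ∀ v, G.degree v ≤ d)
    (h : ℝ) (hh : 0 < h)
    (hiso : ∀ T : Finset V, (T.card : ℝ) ≤ n / 2 →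
      h * T.card ≤ ((Finset.univ.filter fun v =>
        v ∉ T ∧ ∃ u ∈ T, G.Adj u v).card : ℝ))
    (S : Finset V)
    (hS1 : (n : ℝ) / 2 ≤ S.card)
    (hS2 : (S.card : ℝ) < ((d + 2 * h) / (2 * d + 2 * h)) * n)
    (S₁ : Finset V)
    (hS₁ : S₁ = S ∪ Finset.univ.filter fun v => ∃ u ∈ S, G.Adj u v) :
    (S.card : ℝ) + (h / d) * Sᶜ.card ≤ (S₁.card : ℝ) ∧
      ((d + 2 * h) / (2 * d + 2 * h)) * n ≤ (S₁.card : ℝ) :=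
  stmt_3_general G n hn d hdeg h hh hiso S hS1 S₁ hS₁
end

section
/- Let G be a graph on n vertices, and suppose every vertex set U with |U| ≤ εn and all M-neighborhoods tree-like contains at least |U|/4 'black' vertices (vertices with a free branch of depth 2M). Suppose distinct black vertices v_1, …, v_k of U are each assigned the subgraph consisting of v_i together with its free branch of depth M inside its free branch of depth 2M. Then these k subgraphs are pairwise vertex-disjoint, and each is isomorphic as a graph to Δ_M (the rooted (d−1)-ary tree of depth M with root of degree 1). -/
/-- Vertices of Δ_M, the tree obtained from the infinite d-regular tree by
severing d-1 edges at the root and keeping the depth-M neighborhood of the root: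
`none` is the root O (of degree 1), and `some l` encodes the vertex reached from
the unique child of the root by following the sequence of choices `l`
(so internal vertices have degree d, i.e. d-1 children). -/
def DeltaVert (d M : ℕ) : Type :=
  Option {l : List (Fin (d - 1)) // l.length ≤ M - 1}

/-- The graph Δ_M: the root is joined to the empty sequence, and a sequence is
joined to each of its one-step extensions. -/
def DeltaGraph (d M : ℕ) : SimpleGraph (DeltaVert d M) :=
  SimpleGraph.fromRel (fun x y =>
    (x = none ∧ ∃ h, y = some ⟨[], h⟩) ∨
    (∃ (a : Fin (d - 1)) (l : List (Fin (d - 1))) (h1 : l.length ≤ M - 1)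
        (h2 : (a :: l).length ≤ M - 1),
      x = some ⟨l, h1⟩ ∧ y = some ⟨a :: l, h2⟩))

/-!
Around each `v i` the ball of radius `2 * M` induces a tree, so within it every vertex other than
the centre has exactly one neighbour closer to the centre and, by regularity, `d - 1` neighbours
farther away. Descending from `b i` by at most `M - 1` such steps therefore reaches every vertex of
the depth-`M` branch exactly once, and adjacency there is the parent relation: this is Δ_M.

If `x` lay in the pieces of `v i` and `v j`, say no closer to `v i` than to `v j`, a geodesic from
`x` to `v j` has length at most `M`, so it stays in the tree around `v i`, where a walk can only
leave the branch through `v i`. It avoids `v i`, which is farther from `x`, so `v j` would lie in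
the free branch of `v i`.
-/

namespace SimpleGraph

variable {V : Type*} {G : SimpleGraph V}

lemma Walk.dist_add_dist_le_length {u v w : V} (p : G.Walk u v) (hw : w ∈ p.support) :
    G.dist u w + G.dist w v ≤ p.length := by
  classical
  calc G.dist u w + G.dist w v ≤ (p.takeUntil w hw).length + (p.dropUntil w hw).length :=
        add_le_add (dist_le _) (dist_le _)
    _ = p.length := by rw [← Walk.length_append, Walk.take_spec]

lemma Connected.exists_adj_dist_add_one (hconn : G.Connected) {c y : V} (hy : G.dist c y ≠ 0) :
    ∃ z, G.Adj z y ∧ G.dist c z + 1 = G.dist c y := by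
  obtain ⟨p, hp⟩ := hconn.exists_walk_length_eq_dist c y
  have hnil : ¬ p.Nil := fun h => hy (hp ▸ Walk.length_eq_zero_iff.mpr h)
  refine ⟨p.penultimate, p.adj_penultimate hnil, ?_⟩
  have := dist_le p.dropLast
  have := p.length_dropLast
  have := (p.adj_penultimate hnil).diff_dist_adj (u := c)
  omega

lemma Walk.eq_of_isPath_of_isAcyclic_induce {s : Set V} (hs : (G.induce s).IsAcyclic)
    {u v : V} {p q : G.Walk u v} (hp : p.IsPath) (hq : q.IsPath)
    (hps : ∀ x ∈ p.support, x ∈ s) (hqs : ∀ x ∈ q.support, x ∈ s) : p = q := by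
  have hp' : (p.induce s hps).IsPath := .of_map (f := (Embedding.induce s).toHom) (by simpa)
  have hq' : (q.induce s hqs).IsPath := .of_map (f := (Embedding.induce s).toHom) (by simpa)
  have h := (hs.subsingleton_path _ _).elim ⟨_, hp'⟩ ⟨_, hq'⟩
  simpa using congrArg (fun r : (G.induce s).Path _ _ => r.1.map (Embedding.induce s).toHom) h

section AcyclicBall

variable {c : V} {R : ℕ} (hconn : G.Connected)
  (hT : (G.induce {x | G.dist c x ≤ R}).IsAcyclic)
include hconn hT

lemma eq_of_adj_of_dist_le_of_isAcyclic {y z₁ z₂ : V} (hy : G.dist c y ≤ R)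
    (h₁ : G.Adj z₁ y) (h₂ : G.Adj z₂ y)
    (hd₁ : G.dist c z₁ ≤ G.dist c y) (hd₂ : G.dist c z₂ ≤ G.dist c y) : z₁ = z₂ := by
  have geodesic_concat : ∀ z (h : G.Adj z y), G.dist c z ≤ G.dist c y →
      ∃ p : G.Walk c y, p.IsPath ∧ (∀ x ∈ p.support, x ∈ {x | G.dist c x ≤ R}) ∧
        p.penultimate = z := by
    intro z h hz
    obtain ⟨q, hq, hql⟩ := hconn.exists_path_of_dist c z
    have hyq : y ∉ q.support := fun hmem => by
      have := q.dist_add_dist_le_length hmem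
      have := dist_eq_one_iff_adj.mpr h.symm
      omega
    refine ⟨q.concat h, hq.concat hyq h, fun x hx => ?_, q.penultimate_concat h⟩
    rw [Walk.support_concat, List.mem_append, List.mem_singleton] at hx
    rcases hx with hx | rfl
    · have := q.dist_add_dist_le_length hx
      show G.dist c x ≤ R
      omega
    · exact hy
  obtain ⟨p₁, hp₁, hs₁, rfl⟩ := geodesic_concat z₁ h₁ hd₁
  obtain ⟨p₂, hp₂, hs₂, rfl⟩ := geodesic_concat z₂ h₂ hd₂
  rw [Walk.eq_of_isPath_of_isAcyclic_induce hT hp₁ hp₂ hs₁ hs₂]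

lemma dist_ne_of_adj_of_isAcyclic {y z : V} (hy : G.dist c y ≤ R) (h : G.Adj y z) :
    G.dist c y ≠ G.dist c z := by
  intro heq
  by_cases h0 : G.dist c y = 0
  · have hcy := (hconn c y).dist_eq_zero_iff.mp h0
    have hcz := (hconn c z).dist_eq_zero_iff.mp (heq ▸ h0)
    exact h.ne (hcy.symm.trans hcz)
  obtain ⟨w, hw, hwd⟩ := hconn.exists_adj_dist_add_one h0
  obtain rfl : w = z :=
    eq_of_adj_of_dist_le_of_isAcyclic hconn hT hy hw h.symm (by omega) heq.ge
  omega

lemma dist_eq_add_one_or_of_adj_of_isAcyclic {y z : V} (hy : G.dist c y ≤ R) (h : G.Adj y z) :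
    G.dist c z = G.dist c y + 1 ∨ G.dist c y = G.dist c z + 1 := by
  have := h.diff_dist_adj (u := c)
  have := dist_ne_of_adj_of_isAcyclic hconn hT hy h
  omega

end AcyclicBall

/-- In a tree-like ball around `c`, these are the vertices whose path from `c` runs through `b`. -/
def branch (G : SimpleGraph V) (c b : V) (n : ℕ) : Set V :=
  {x | G.dist c x ≤ n ∧ G.dist c x = G.dist b x + 1}

lemma branch_mono {c b : V} {m n : ℕ} (h : m ≤ n) : G.branch c b m ⊆ G.branch c b n :=
  fun _ ⟨hm, hx⟩ => ⟨hm.trans h, hx⟩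

lemma dist_le_of_mem_insert_branch {c b x : V} {n : ℕ} (hx : x ∈ insert c (G.branch c b n)) :
    G.dist c x ≤ n := by
  rcases hx with rfl | hx
  · simp
  · exact hx.1

section Branch

variable {c b : V} {R : ℕ}

lemma mem_branch_of_adj_of_dist_eq_add_one (hcb : G.Adj c b) {x y : V}
    (hx : x ∈ G.branch c b R) (h : G.Adj x y) (hy : G.dist c y = G.dist c x + 1)
    (hyR : G.dist c y ≤ R) : y ∈ G.branch c b R := by
  have := h.diff_dist_adj (u := b)
  have := hcb.reachable.dist_triangle_left y
  have := dist_eq_one_iff_adj.mpr hcb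
  exact ⟨hyR, by have := hx.2; omega⟩

variable (hconn : G.Connected) (hT : (G.induce {x | G.dist c x ≤ R}).IsAcyclic)
  (hcb : G.Adj c b)
include hconn hT hcb

lemma mem_branch_of_adj_of_dist_add_one_eq {x z : V} (hx : x ∈ G.branch c b R)
    (h : G.Adj z x) (hz : G.dist c z + 1 = G.dist c x) (hx₂ : 2 ≤ G.dist c x) :
    z ∈ G.branch c b R := by
  obtain ⟨hxR, hxb⟩ := hx
  obtain ⟨w, hw, hwd⟩ := hconn.exists_adj_dist_add_one (c := b) (y := x) (by omega)
  have := hcb.reachable.dist_triangle_left w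
  have := dist_eq_one_iff_adj.mpr hcb
  have := hw.diff_dist_adj (u := c)
  obtain rfl : w = z :=
    eq_of_adj_of_dist_le_of_isAcyclic hconn hT hxR hw h (by omega) (by omega)
  exact ⟨by omega, by omega⟩

lemma mem_branch_or_eq_of_adj {x y : V} (hx : x ∈ G.branch c b R) (h : G.Adj x y)
    (hxR : G.dist c x < R) : y ∈ G.branch c b R ∨ y = c := by
  rcases dist_eq_add_one_or_of_adj_of_isAcyclic hconn hT hx.1 h with hy | hy
  · exact .inl (mem_branch_of_adj_of_dist_eq_add_one hcb hx h hy (by omega))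
  · by_cases hx₁ : G.dist c x = 1
    · exact .inr ((hconn c y).dist_eq_zero_iff.mp (by omega)).symm
    · exact .inl (mem_branch_of_adj_of_dist_add_one_eq hconn hT hcb hx h.symm hy.symm
        (by have := hx.2; omega))

lemma Walk.mem_branch_or_mem_support {x y : V} (p : G.Walk x y) (hx : x ∈ G.branch c b R)
    (hp : G.dist c x + p.length ≤ R) : y ∈ G.branch c b R ∨ c ∈ p.support := by
  induction p with
  | nil => exact .inl hx
  | @cons x x' y h p ih =>
    rw [Walk.length_cons] at hp
    rcases mem_branch_or_eq_of_adj hconn hT hcb hx h (by omega) with hx' | rfl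
    · have := h.diff_dist_adj (u := c)
      exact (ih hx' (by omega)).imp_right (List.mem_cons_of_mem _)
    · exact .inr (by simp)

lemma mem_branch_of_dist_le_dist {c' x : V} (hne : c ≠ c') (hx : x ∈ insert c (G.branch c b R))
    (hR : G.dist c x + G.dist x c' ≤ R) (hle : G.dist x c' ≤ G.dist x c) :
    c' ∈ G.branch c b R := by
  have hcc' : G.dist c c' ≠ 0 := fun h => hne ((hconn c c').dist_eq_zero_iff.mp h)
  rcases hx with rfl | hx
  · simp only [dist_self, nonpos_iff_eq_zero] at hle
    exact absurd hle hcc'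
  obtain ⟨p, hp⟩ := hconn.exists_walk_length_eq_dist x c'
  refine (p.mem_branch_or_mem_support hconn hT hcb hx (by omega)).resolve_right fun hc => ?_
  have := p.dist_add_dist_le_length hc
  omega

end Branch

lemma disjoint_insert_branch {c₁ c₂ b₁ b₂ : V} {M : ℕ} (hconn : G.Connected)
    (hT₁ : (G.induce {x | G.dist c₁ x ≤ 2 * M}).IsAcyclic)
    (hT₂ : (G.induce {x | G.dist c₂ x ≤ 2 * M}).IsAcyclic)
    (hcb₁ : G.Adj c₁ b₁) (hcb₂ : G.Adj c₂ b₂) (hne : c₁ ≠ c₂)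
    (h₁ : c₂ ∉ G.branch c₁ b₁ (2 * M)) (h₂ : c₁ ∉ G.branch c₂ b₂ (2 * M)) :
    Disjoint (insert c₁ (G.branch c₁ b₁ M)) (insert c₂ (G.branch c₂ b₂ M)) := by
  rw [Set.disjoint_left]
  intro x hx₁ hx₂
  have hd₁ := dist_le_of_mem_insert_branch hx₁
  have hd₂ := dist_le_of_mem_insert_branch hx₂
  have hmono : M ≤ 2 * M := by omega
  rcases le_total (G.dist x c₂) (G.dist x c₁) with hle | hle
  · refine h₁ (mem_branch_of_dist_le_dist hconn hT₁ hcb₁ hne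
      (Set.insert_subset_insert (branch_mono hmono) hx₁) ?_ hle)
    rw [dist_comm (u := x)]
    omega
  · refine h₂ (mem_branch_of_dist_le_dist hconn hT₂ hcb₂ hne.symm
      (Set.insert_subset_insert (branch_mono hmono) hx₂) ?_ hle)
    rw [dist_comm (u := x)]
    omega

noncomputable def childFinset (G : SimpleGraph V) [G.LocallyFinite] (c y : V) : Finset V :=
  (G.neighborFinset y).filter fun z => G.dist c z = G.dist c y + 1

section Children

variable [G.LocallyFinite]

lemma mem_childFinset {c y z : V} :
    z ∈ G.childFinset c y ↔ G.Adj y z ∧ G.dist c z = G.dist c y + 1 := by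
  simp [childFinset]

lemma card_childFinset {c y : V} {d R : ℕ} (hconn : G.Connected)
    (hT : (G.induce {x | G.dist c x ≤ R}).IsAcyclic) (hreg : G.IsRegularOfDegree d)
    (hy₀ : G.dist c y ≠ 0) (hyR : G.dist c y ≤ R) : (G.childFinset c y).card = d - 1 := by
  classical
  obtain ⟨w, hw, hwd⟩ := hconn.exists_adj_dist_add_one hy₀
  have hsplit : G.neighborFinset y = insert w (G.childFinset c y) := by
    ext z
    rw [mem_neighborFinset, Finset.mem_insert, mem_childFinset]
    constructor
    · intro h
      rcases dist_eq_add_one_or_of_adj_of_isAcyclic hconn hT hyR h with hz | hz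
      · exact .inr ⟨h, hz⟩
      · exact .inl (eq_of_adj_of_dist_le_of_isAcyclic hconn hT hyR h.symm hw
          (by omega) (by omega))
    · rintro (rfl | ⟨h, -⟩)
      exacts [hw.symm, h]
  have hw' : w ∉ G.childFinset c y := fun h => by
    have := (mem_childFinset.mp h).2
    omega
  have := card_neighborFinset_eq_degree G y
  rw [hsplit, Finset.card_insert_of_notMem hw', hreg y] at this
  omega

/-- Junk (constantly `y`) unless `y` has exactly `d - 1` children. -/
noncomputable def childEnum (G : SimpleGraph V) [G.LocallyFinite] (d : ℕ) (c y : V)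
    (a : Fin (d - 1)) : V :=
  if h : (G.childFinset c y).card = d - 1 then (Finset.equivFinOfCardEq h).symm a else y

variable {d : ℕ} {c y : V} (h : (G.childFinset c y).card = d - 1)
include h

lemma childEnum_mem_childFinset (a : Fin (d - 1)) : G.childEnum d c y a ∈ G.childFinset c y := by
  rw [childEnum, dif_pos h]
  exact Subtype.mem _

lemma childEnum_injective : Function.Injective (G.childEnum d c y) := by
  intro a₁ a₂ heq
  rw [childEnum, childEnum, dif_pos h, dif_pos h] at heq
  exact (Finset.equivFinOfCardEq h).symm.injective (Subtype.ext heq)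

lemma exists_childEnum_eq {z : V} (hz : z ∈ G.childFinset c y) :
    ∃ a, G.childEnum d c y a = z :=
  ⟨Finset.equivFinOfCardEq h ⟨z, hz⟩, by rw [childEnum, dif_pos h, Equiv.symm_apply_apply]⟩

end Children

/-- The head of `l` is the last step down, as in the encoding of `DeltaVert`. -/
noncomputable def descend (G : SimpleGraph V) [G.LocallyFinite] (d : ℕ) (c b : V) :
    List (Fin (d - 1)) → V
  | [] => b
  | a :: l => G.childEnum d c (G.descend d c b l) a

section Descend

variable [G.LocallyFinite] {d M : ℕ} {c b : V} (hconn : G.Connected)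
  (hT : (G.induce {x | G.dist c x ≤ M}).IsAcyclic) (hreg : G.IsRegularOfDegree d)
  (hcb : G.Adj c b)
include hconn hT hreg hcb

lemma dist_descend {l : List (Fin (d - 1))} (hl : l.length < M) :
    G.dist c (G.descend d c b l) = l.length + 1 := by
  induction l with
  | nil => exact dist_eq_one_iff_adj.mpr hcb
  | cons a l ih =>
    rw [List.length_cons] at hl
    have ih := ih (by omega)
    have hcard := card_childFinset hconn hT hreg (y := G.descend d c b l) (by omega) (by omega)
    rw [descend, (mem_childFinset.mp (childEnum_mem_childFinset hcard a)).2, ih,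
      List.length_cons]

lemma card_childFinset_descend {l : List (Fin (d - 1))} (hl : l.length < M) :
    (G.childFinset c (G.descend d c b l)).card = d - 1 := by
  have := dist_descend hconn hT hreg hcb hl
  exact card_childFinset hconn hT hreg (by omega) (by omega)

lemma adj_descend_cons (a : Fin (d - 1)) {l : List (Fin (d - 1))} (hl : l.length < M) :
    G.Adj (G.descend d c b l) (G.descend d c b (a :: l)) :=
  (mem_childFinset.mp
    (childEnum_mem_childFinset (card_childFinset_descend hconn hT hreg hcb hl) a)).1

lemma descend_mem_branch {l : List (Fin (d - 1))} (hl : l.length < M) :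
    G.descend d c b l ∈ G.branch c b M := by
  induction l with
  | nil => exact ⟨by rw [dist_descend hconn hT hreg hcb hl]; exact hl, by simp [descend, hcb]⟩
  | cons a l ih =>
    rw [List.length_cons] at hl
    have hd := dist_descend hconn hT hreg hcb (l := a :: l) (by simpa using hl)
    have hd' := dist_descend hconn hT hreg hcb (l := l) (by omega)
    rw [List.length_cons] at hd
    exact mem_branch_of_adj_of_dist_eq_add_one hcb (ih (by omega))
      (adj_descend_cons hconn hT hreg hcb a (by omega)) (by omega) (by omega)

lemma eq_descend_of_adj_descend_cons {a : Fin (d - 1)} {l : List (Fin (d - 1))} {z : V}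
    (hl : l.length + 1 < M) (h : G.Adj z (G.descend d c b (a :: l)))
    (hz : G.dist c z + 1 = G.dist c (G.descend d c b (a :: l))) : z = G.descend d c b l := by
  have hd := dist_descend hconn hT hreg hcb (l := a :: l) (by simpa using hl)
  have hd' := dist_descend hconn hT hreg hcb (l := l) (by omega)
  rw [List.length_cons] at hd
  exact eq_of_adj_of_dist_le_of_isAcyclic hconn hT (by omega) h
    (adj_descend_cons hconn hT hreg hcb a (by omega)) (by omega) (by omega)

lemma eq_of_descend_eq {l₁ l₂ : List (Fin (d - 1))} (hl₁ : l₁.length < M) (hl₂ : l₂.length < M)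
    (heq : G.descend d c b l₁ = G.descend d c b l₂) : l₁ = l₂ := by
  have hlen : l₁.length = l₂.length := by
    have := congrArg (G.dist c) heq
    rwa [dist_descend hconn hT hreg hcb hl₁, dist_descend hconn hT hreg hcb hl₂,
      Nat.add_right_cancel_iff] at this
  induction l₁ generalizing l₂ with
  | nil => exact (List.eq_nil_of_length_eq_zero hlen.symm).symm
  | cons a₁ l₁ ih =>
    obtain _ | ⟨a₂, l₂⟩ := l₂
    · simp at hlen
    simp only [List.length_cons] at hl₁ hl₂ hlen
    have hparent : G.descend d c b l₁ = G.descend d c b l₂ :=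
      eq_descend_of_adj_descend_cons hconn hT hreg hcb hl₂
        (by rw [← heq]; exact adj_descend_cons hconn hT hreg hcb a₁ (by omega))
        (by rw [← heq, dist_descend hconn hT hreg hcb (by omega),
          dist_descend hconn hT hreg hcb (by simpa using hl₁), List.length_cons])
    obtain rfl := ih (by omega) (by omega) hparent (by omega)
    obtain rfl := childEnum_injective (card_childFinset_descend hconn hT hreg hcb (by omega)) heq
    rfl

lemma exists_descend_eq {x : V} (hx : x ∈ G.branch c b M) :
    ∃ l : List (Fin (d - 1)), l.length < M ∧ G.descend d c b l = x := by
  suffices ∀ n, ∀ x ∈ G.branch c b M, G.dist c x = n + 1 →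
      ∃ l : List (Fin (d - 1)), l.length = n ∧ G.descend d c b l = x by
    obtain ⟨l, hl, hlx⟩ := this (G.dist c x - 1) x hx (by have := hx.2; omega)
    exact ⟨l, by have := hx.1; have := hx.2; omega, hlx⟩
  intro n
  induction n with
  | zero =>
    intro x ⟨_, hxb⟩ hx₁
    exact ⟨[], rfl, (hconn b x).dist_eq_zero_iff.mp (by omega)⟩
  | succ n ih =>
    intro x hx hx₁
    obtain ⟨z, hz, hzd⟩ := hconn.exists_adj_dist_add_one (c := c) (y := x) (by omega)
    obtain ⟨l, rfl, rfl⟩ := ih z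
      (mem_branch_of_adj_of_dist_add_one_eq hconn hT hcb hx hz hzd (by omega)) (by omega)
    obtain ⟨a, ha⟩ := exists_childEnum_eq
      (card_childFinset_descend hconn hT hreg hcb (by have := hx.1; omega))
      (mem_childFinset.mpr ⟨hz, by omega⟩)
    exact ⟨a :: l, rfl, ha⟩

end Descend

def IsDeltaChild {d M : ℕ} (x y : DeltaVert d M) : Prop :=
  (x = none ∧ ∃ h, y = some ⟨[], h⟩) ∨
    (∃ (a : Fin (d - 1)) (l : List (Fin (d - 1))) (h1 : l.length ≤ M - 1)
        (h2 : (a :: l).length ≤ M - 1),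
      x = some ⟨l, h1⟩ ∧ y = some ⟨a :: l, h2⟩)

lemma deltaGraph_adj {d M : ℕ} {x y : DeltaVert d M} :
    (DeltaGraph d M).Adj x y ↔ x ≠ y ∧ (IsDeltaChild x y ∨ IsDeltaChild y x) :=
  SimpleGraph.fromRel_adj _ _ _

noncomputable def deltaMap (G : SimpleGraph V) [G.LocallyFinite] (d M : ℕ) (c b : V) :
    DeltaVert d M → V
  | none => c
  | some l => G.descend d c b l.1

section DeltaMap

variable [G.LocallyFinite] {d M : ℕ} {c b : V} (hconn : G.Connected)
  (hT : (G.induce {x | G.dist c x ≤ M}).IsAcyclic) (hreg : G.IsRegularOfDegree d)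
  (hcb : G.Adj c b) (hM : 1 ≤ M)
include hconn hT hreg hcb hM

lemma dist_deltaMap_some (l : {l : List (Fin (d - 1)) // l.length ≤ M - 1}) :
    G.dist c (G.deltaMap d M c b (some l)) = l.1.length + 1 :=
  dist_descend hconn hT hreg hcb (by have := l.2; omega)

lemma deltaMap_mem_insert_branch (o : DeltaVert d M) :
    G.deltaMap d M c b o ∈ insert c (G.branch c b M) := by
  rcases o with _ | ⟨l, hl⟩
  · exact Set.mem_insert _ _
  · exact Set.mem_insert_of_mem _ (descend_mem_branch hconn hT hreg hcb (l := l) (by omega))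

lemma deltaMap_injective : Function.Injective (G.deltaMap d M c b) := by
  have hne (l) : G.deltaMap d M c b (some l) ≠ c := fun h => by
    have := dist_deltaMap_some hconn hT hreg hcb hM l
    rw [h, dist_self] at this
    omega
  rintro (_ | ⟨l₁, hl₁⟩) (_ | ⟨l₂, hl₂⟩) h
  · rfl
  · exact absurd h.symm (hne _)
  · exact absurd h (hne _)
  · obtain rfl := eq_of_descend_eq hconn hT hreg hcb (l₁ := l₁) (l₂ := l₂) (by omega) (by omega) h
    rfl

omit hM in
lemma exists_deltaMap_eq {x : V} (hx : x ∈ insert c (G.branch c b M)) :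
    ∃ o, G.deltaMap d M c b o = x := by
  rcases hx with rfl | hx
  · exact ⟨none, rfl⟩
  · obtain ⟨l, hl, rfl⟩ := exists_descend_eq hconn hT hreg hcb hx
    exact ⟨some ⟨l, by omega⟩, rfl⟩

lemma adj_deltaMap_of_isChild {o₁ o₂ : DeltaVert d M} (h : IsDeltaChild o₁ o₂) :
    G.Adj (G.deltaMap d M c b o₁) (G.deltaMap d M c b o₂) := by
  rcases h with ⟨rfl, _, rfl⟩ | ⟨a, l, hl, -, rfl, rfl⟩
  · exact hcb
  · exact adj_descend_cons hconn hT hreg hcb a (l := l) (by omega)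

lemma isChild_of_adj_deltaMap {o₁ o₂ : DeltaVert d M}
    (h : G.Adj (G.deltaMap d M c b o₁) (G.deltaMap d M c b o₂))
    (hd : G.dist c (G.deltaMap d M c b o₁) + 1 = G.dist c (G.deltaMap d M c b o₂)) :
    IsDeltaChild o₁ o₂ := by
  rcases o₂ with _ | ⟨_ | ⟨a, l⟩, hl⟩
  · simp [deltaMap] at hd
  · rw [dist_deltaMap_some hconn hT hreg hcb hM] at hd
    obtain rfl : o₁ = none := deltaMap_injective hconn hT hreg hcb hM
      ((hconn c _).dist_eq_zero_iff.mp (by simpa using hd)).symm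
    exact .inl ⟨rfl, hl, rfl⟩
  · have hl' : l.length ≤ M - 1 := by simp at hl; omega
    obtain rfl : o₁ = some ⟨l, hl'⟩ := deltaMap_injective hconn hT hreg hcb hM
      (eq_descend_of_adj_descend_cons hconn hT hreg hcb (a := a) (l := l)
        (by simp at hl; omega) h hd)
    exact .inr ⟨a, l, hl', hl, rfl, rfl⟩

lemma adj_deltaMap_iff {o₁ o₂ : DeltaVert d M} :
    G.Adj (G.deltaMap d M c b o₁) (G.deltaMap d M c b o₂) ↔ (DeltaGraph d M).Adj o₁ o₂ := by
  rw [deltaGraph_adj]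
  constructor
  · intro h
    refine ⟨fun heq => h.ne (congrArg _ heq), ?_⟩
    have hR := dist_le_of_mem_insert_branch (deltaMap_mem_insert_branch hconn hT hreg hcb hM o₁)
    rcases dist_eq_add_one_or_of_adj_of_isAcyclic hconn hT hR h with hd | hd
    · exact .inl (isChild_of_adj_deltaMap hconn hT hreg hcb hM h hd.symm)
    · exact .inr (isChild_of_adj_deltaMap hconn hT hreg hcb hM h.symm hd.symm)
  · rintro ⟨-, h | h⟩
    · exact adj_deltaMap_of_isChild hconn hT hreg hcb hM h
    · exact (adj_deltaMap_of_isChild hconn hT hreg hcb hM h).symm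

theorem nonempty_iso_deltaGraph :
    Nonempty (G.induce (insert c (G.branch c b M)) ≃g DeltaGraph d M) := by
  let e : DeltaVert d M ≃ (insert c (G.branch c b M) : Set V) :=
    Equiv.ofBijective
      (fun o => ⟨G.deltaMap d M c b o, deltaMap_mem_insert_branch hconn hT hreg hcb hM o⟩)
      ⟨fun _ _ h => deltaMap_injective hconn hT hreg hcb hM (congrArg Subtype.val h),
        fun ⟨x, hx⟩ => (exists_deltaMap_eq hconn hT hreg hcb hx).imp fun _ h => Subtype.ext h⟩
  exact ⟨(RelIso.mk e fun {_ _} => adj_deltaMap_iff hconn hT hreg hcb hM).symm⟩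

end DeltaMap

end SimpleGraph

open Classical in
theorem stmt_18_general {V : Type*} [Fintype V] (G : SimpleGraph V) (hconn : G.Connected)
    (d M : ℕ) (hM : 1 ≤ M)
    (hreg : G.IsRegularOfDegree d)
    (U : Finset V) (k : ℕ) (v : Fin k → V) (hinj : Function.Injective v)
    (hvU : ∀ i, v i ∈ U)
    (htree : ∀ i, (G.induce {x : V | G.dist (v i) x ≤ 2 * M}).IsAcyclic)
    (b : Fin k → V) (hb : ∀ i, G.Adj (v i) (b i))
    (Branch : Fin k → Set V)
    (hBranch : ∀ i, Branch i =
      {x : V | G.dist (b i) x ≤ 2 * M - 1 ∧ G.dist (v i) x = G.dist (b i) x + 1})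
    (hfree : ∀ i, ∀ u ∈ U, (u : V) ∉ Branch i)
    (Sub : Fin k → Set V)
    (hSub : ∀ i, Sub i = insert (v i) {x : V | x ∈ Branch i ∧ G.dist (v i) x ≤ M}) :
    (∀ i j, i ≠ j → Disjoint (Sub i) (Sub j)) ∧
      ∀ i, Nonempty ((G.induce (Sub i)) ≃g DeltaGraph d M) := by
  have hBranch' (i) : Branch i = G.branch (v i) (b i) (2 * M) := by
    rw [hBranch i]
    ext x
    simp only [SimpleGraph.branch, Set.mem_ofPred_eq]
    omega
  have hSub' (i) : Sub i = insert (v i) (G.branch (v i) (b i) M) := by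
    rw [hSub i, hBranch' i]
    congr 1
    ext x
    simp only [SimpleGraph.branch, Set.mem_ofPred_eq]
    omega
  refine ⟨fun i j hij => ?_, fun i => ?_⟩
  · rw [hSub' i, hSub' j]
    exact SimpleGraph.disjoint_insert_branch hconn (htree i) (htree j) (hb i) (hb j)
      (hinj.ne hij) (hBranch' i ▸ hfree i (v j) (hvU j)) (hBranch' j ▸ hfree j (v i) (hvU i))
  · have hT : (G.induce {x | G.dist (v i) x ≤ M}).IsAcyclic :=
      (htree i).embedding (G.induceHomOfLE fun x (hx : G.dist (v i) x ≤ M) =>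
        show G.dist (v i) x ≤ 2 * M by omega)
    rw [hSub' i]
    exact SimpleGraph.nonempty_iso_deltaGraph hconn hT hreg (hb i) hM

open Classical in
/-- Black vertices v i of U, each with a free branch of depth 2M (hanging from the
neighbor b i, containing no vertex of U) inside a tree-like 2M-neighborhood of a
d-regular graph: the depth-M parts of these branches together with their roots v i
are pairwise vertex-disjoint and each induces a copy of Δ_M. -/
theorem stmt_18 {V : Type*} [Fintype V] (G : SimpleGraph V) (hconn : G.Connected)
    (d M : ℕ) (hd : 3 ≤ d) (hM : 1 ≤ M)
    (hreg : G.IsRegularOfDegree d)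
    (U : Finset V) (k : ℕ) (v : Fin k → V) (hinj : Function.Injective v)
    (hvU : ∀ i, v i ∈ U)
    (htree : ∀ i, (G.induce {x : V | G.dist (v i) x ≤ 2 * M}).IsAcyclic)
    (b : Fin k → V) (hb : ∀ i, G.Adj (v i) (b i))
    (Branch : Fin k → Set V)
    (hBranch : ∀ i, Branch i =
      {x : V | G.dist (b i) x ≤ 2 * M - 1 ∧ G.dist (v i) x = G.dist (b i) x + 1})
    (hfree : ∀ i, ∀ u ∈ U, (u : V) ∉ Branch i)
    (Sub : Fin k → Set V)
    (hSub : ∀ i, Sub i = insert (v i) {x : V | x ∈ Branch i ∧ G.dist (v i) x ≤ M}) :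
    (∀ i j, i ≠ j → Disjoint (Sub i) (Sub j)) ∧
      ∀ i, Nonempty ((G.induce (Sub i)) ≃g DeltaGraph d M) :=
  stmt_18_general G hconn d M hM hreg U k v hinj hvU htree b hb Branch hBranch hfree Sub hSub
end
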